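/- arXiv:2507.07777 — 2 statements merged into one kernel-verified Lean document; each statement's English description precedes it below -/
import Mathlib

section
/- Let a ∈ 𝒜. Then a has a generalized w-weighted core-EP inverse if and only if a has a w-weighted g-Drazin inverse a^{d,w} and a^{d,w} has a w-weighted core inverse. In this case a^{⊛d,w} = (a^{d,w}·w)²·(a^{d,w})^{⊛,w}, and moreover (a^{d,w})^{⊛,w} = (aw)²·a^{⊛d,w}. -/
open Filter

/-- `y` is quasinilpotent: `‖yⁿ‖^{1/n} → 0`. -/
def IsQuasinilpotent {R : Type*} [NormedRing R] (y : R) : Prop :=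
  Filter.Tendsto (fun n : ℕ => ‖y ^ n‖ ^ (1 / (n : ℝ))) Filter.atTop (nhds 0)

/-- `y` is `w`-quasinilpotent: `‖(yw)ⁿ‖^{1/n} → 0`. -/
def IsWQuasinilpotent {R : Type*} [NormedRing R] (w y : R) : Prop :=
  Filter.Tendsto (fun n : ℕ => ‖(y * w) ^ n‖ ^ (1 / (n : ℝ))) Filter.atTop (nhds 0)

/-- `x` is a `w`-weighted core inverse of `a`. -/
def IsWCoreInv {R : Type*} [NormedRing R] [StarRing R] (w a x : R) : Prop :=
  a * (w * x) ^ 2 = x ∧ star (w * a * w * x) = w * a * w * x ∧ x * w * (a * w) ^ 2 = a * w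

/-- `x` is a generalized `w`-weighted core-EP inverse of `a`. -/
def IsWCoreEPInv {R : Type*} [NormedRing R] [StarRing R] (w a x : R) : Prop :=
  a * (w * x) ^ 2 = x ∧ star (w * a * w * x) = w * a * w * x ∧
    Filter.Tendsto (fun n : ℕ => ‖(a * w) ^ n - x * w * (a * w) ^ (n + 1)‖ ^ (1 / (n : ℝ)))
      Filter.atTop (nhds 0)

/-- `g` is a group inverse of `b`. -/
def IsGroupInv {R : Type*} [Ring R] (b g : R) : Prop :=
  b * g * b = b ∧ g * b * g = g ∧ b * g = g * b

/-- `u` is a (1,3)-inverse of `b`. -/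
def Is13Inv {R : Type*} [Ring R] [StarRing R] (b u : R) : Prop :=
  b * u * b = b ∧ star (b * u) = b * u

/-- `x` is a `(b,c)`-inverse of `a`. -/
def IsBCInv {R : Type*} [Ring R] (b c a x : R) : Prop :=
  x * a * b = b ∧ c * a * x = c ∧ (∃ s, x = b * s * x) ∧ (∃ t, x = x * t * c)

/-- `x` is a g-Drazin inverse of `b`. -/
def IsGDrazinInv {R : Type*} [NormedRing R] (b x : R) : Prop :=
  b * x = x * b ∧ x * b * x = x ∧ IsQuasinilpotent (b - b ^ 2 * x)

/-- `x` is a `w`-weighted g-Drazin inverse of `a`. -/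
def IsWGDrazinInv {R : Type*} [NormedRing R] (w a x : R) : Prop :=
  a * w * x = x * w * a ∧ x * w * a * w * x = x ∧
    IsWQuasinilpotent w (a - a * w * x * w * a)

/-- `x` is a core inverse of `a`. -/
def IsCoreInv {R : Type*} [Ring R] [StarRing R] (a x : R) : Prop :=
  a * x ^ 2 = x ∧ star (a * x) = a * x ∧ x * a ^ 2 = a

/-- `x` is a generalized core-EP inverse of `a`. -/
def IsCoreEPInv {R : Type*} [NormedRing R] [StarRing R] (a x : R) : Prop :=
  a * x ^ 2 = x ∧ star (a * x) = a * x ∧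
    Filter.Tendsto (fun n : ℕ => ‖a ^ n - x * a ^ (n + 1)‖ ^ (1 / (n : ℝ)))
      Filter.atTop (nhds 0)

/-- `x` is a pseudo core (core-EP) inverse of `a`. -/
def IsPseudoCoreInv {R : Type*} [Ring R] [StarRing R] (a x : R) : Prop :=
  a * x ^ 2 = x ∧ star (a * x) = a * x ∧ ∃ k : ℕ, 0 < k ∧ x * a ^ (k + 1) = a ^ k

/-- `u` is a `(1,3,w)`-inverse of `b`. -/
def Is13wInv {R : Type*} [Ring R] [StarRing R] (w b u : R) : Prop :=
  b = b * w * u * w * b ∧ star (w * b * w * u) = w * b * w * u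

/-!
Put `B = a * w`. A `w`-weighted g-Drazin inverse `d` of `a` gives the g-Drazin inverse `E = d * w`
of `B`, and conversely a g-Drazin inverse `E` of `B` gives the weighted one `E ^ 2 * a`; a
generalized `w`-weighted core-EP inverse `x` gives `X = x * w` with `B X² = X` and
`rₙ = Bⁿ - X Bⁿ⁺¹` decaying faster than every geometric sequence.

From such an `X`, the g-Drazin inverse of `B` is `E = lim X^(m+1) B^m`: consecutive terms differ by
`X^(m+1) rₘ`, and `Bⁿ - Bⁿ⁺¹ E = (B - B² E)ⁿ` is the tail `∑ᵢ Xⁱ rₙ₊ᵢ`, hence quasinilpotent.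
Conversely, each identity linking `E` and `X` (`X B E = E`, `B E X = X`) holds because its defect
equals `rₙ` or `(B - B² E)ⁿ` times a factor growing at most geometrically in `n`, so it vanishes.
These identities make `(a w)² x` the `w`-weighted core inverse of `d` and `(d w)² z` the generalized
core-EP inverse of `a`; uniqueness of the core inverse is the usual argument with the self-adjoint
idempotents `w d w z`.
-/

open Topology

section NormedGroup

variable {E F : Type*} [SeminormedAddCommGroup E] [NormedAddCommGroup F]

-- Equivalent to `‖r n‖ ^ (1 / n) → 0` (`superexpDecay_iff_tendsto_rpow`), but stable under
-- linear bounds, which is the form every estimate below needs.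
def SuperexpDecay (r : ℕ → E) : Prop :=
  ∀ K : ℝ, 0 ≤ K → Tendsto (fun n => K ^ n * ‖r n‖) atTop (𝓝 0)

theorem Real.rpow_one_div_le_iff {t δ : ℝ} (ht : 0 ≤ t) (hδ : 0 ≤ δ) {n : ℕ} (hn : n ≠ 0) :
    t ^ (1 / (n : ℝ)) ≤ δ ↔ t ≤ δ ^ n := by
  rw [one_div, Real.rpow_inv_le_iff_of_pos ht hδ (by positivity), Real.rpow_natCast]

theorem superexpDecay_iff_tendsto_rpow {r : ℕ → E} :
    SuperexpDecay r ↔ Tendsto (fun n : ℕ => ‖r n‖ ^ (1 / (n : ℝ))) atTop (𝓝 0) := by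
  constructor
  · intro hr
    refine tendsto_order.2 ⟨fun a ha => .of_forall fun n => ha.trans_le (by positivity),
      fun ε hε => ?_⟩
    filter_upwards [(hr (2 / ε) (by positivity)).eventually_lt_const one_pos,
      eventually_ne_atTop 0] with n hn hn0
    rw [← inv_div, inv_pow, inv_mul_lt_iff₀ (by positivity), mul_one] at hn
    exact ((Real.rpow_one_div_le_iff (norm_nonneg _) (by positivity) hn0).2 hn.le).trans_lt
      (half_lt_self hε)
  · intro hr K hK
    have hδ : 0 < 1 / (2 * (K + 1)) := by positivity
    have hKδ : K * (1 / (2 * (K + 1))) ≤ 1 / 2 := by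
      rw [mul_one_div, div_le_div_iff₀ (by positivity) two_pos]; linarith
    refine tendsto_of_tendsto_of_tendsto_of_le_of_le' tendsto_const_nhds
      (tendsto_pow_atTop_nhds_zero_of_lt_one (by norm_num) (by norm_num : (1 / 2 : ℝ) < 1))
      (.of_forall fun n => by positivity) ?_
    filter_upwards [hr.eventually (ge_mem_nhds hδ), eventually_ne_atTop 0] with n hn hn0
    calc K ^ n * ‖r n‖ ≤ K ^ n * (1 / (2 * (K + 1))) ^ n := by
          gcongr; exact (Real.rpow_one_div_le_iff (norm_nonneg _) hδ.le hn0).1 hn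
      _ ≤ (1 / 2) ^ n := by rw [← mul_pow]; gcongr

namespace SuperexpDecay

variable {r : ℕ → E}

theorem summable_pow_mul_norm (hr : SuperexpDecay r) {K : ℝ} (hK : 0 ≤ K) :
    Summable fun n => K ^ n * ‖r n‖ := by
  refine .of_norm_bounded_eventually_nat summable_geometric_two ?_
  filter_upwards [(hr (2 * K) (by positivity)).eventually_lt_const one_pos] with n hn
  rw [Real.norm_of_nonneg (by positivity), one_div_pow, le_div_iff₀ (by positivity)]
  rw [mul_pow] at hn
  linarith

theorem summable_pow_mul_norm_add (hr : SuperexpDecay r) {C : ℝ} (hC : 0 ≤ C) (n : ℕ) :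
    Summable fun i => C ^ i * ‖r (i + n)‖ := by
  refine .of_nonneg_of_le (fun i => by positivity) (fun i => ?_)
    ((summable_nat_add_iff n).2 (hr.summable_pow_mul_norm (hC.trans (le_max_left C 1))))
  gcongr
  calc C ^ i ≤ max C 1 ^ i := by gcongr; exact le_max_left _ _
    _ ≤ max C 1 ^ (i + n) := pow_le_pow_right₀ (le_max_right _ _) (Nat.le_add_right _ _)

theorem of_norm_le (hr : SuperexpDecay r) {s : ℕ → F} {C : ℝ}
    (hs : ∀ᶠ n in atTop, ‖s n‖ ≤ C * ‖r n‖) : SuperexpDecay s := by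
  intro K hK
  refine tendsto_of_tendsto_of_tendsto_of_le_of_le' tendsto_const_nhds
    (by simpa using (hr K hK).const_mul C) (.of_forall fun n => by positivity) ?_
  filter_upwards [hs] with n hn
  calc K ^ n * ‖s n‖ ≤ K ^ n * (C * ‖r n‖) := by gcongr
    _ = C * (K ^ n * ‖r n‖) := by ring

theorem of_norm_le_tsum (hr : SuperexpDecay r) {s : ℕ → F} {C : ℝ} (hC : 0 ≤ C)
    (hs : ∀ n, ‖s n‖ ≤ ∑' i, C ^ i * ‖r (i + n)‖) : SuperexpDecay s := by
  intro K hK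
  have hM : 0 ≤ max K C := hK.trans (le_max_left _ _)
  refine tendsto_of_tendsto_of_tendsto_of_le_of_le tendsto_const_nhds
    (tendsto_sum_nat_add fun m => max K C ^ m * ‖r m‖) (fun n => by positivity) (fun n => ?_)
  calc K ^ n * ‖s n‖ ≤ K ^ n * ∑' i, C ^ i * ‖r (i + n)‖ := by gcongr; exact hs n
    _ = ∑' i, K ^ n * (C ^ i * ‖r (i + n)‖) := tsum_mul_left.symm
    _ ≤ ∑' i, max K C ^ (i + n) * ‖r (i + n)‖ := by
        refine Summable.tsum_le_tsum (fun i => ?_) ((hr.summable_pow_mul_norm_add hC n).mul_left _)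
          ((summable_nat_add_iff n).2 (hr.summable_pow_mul_norm hM))
        rw [pow_add, ← mul_assoc, mul_comm (max K C ^ i)]
        gcongr
        · exact le_max_left _ _
        · exact le_max_right _ _

theorem eq_zero_of_norm_le (hr : SuperexpDecay r) {v : F} {C K : ℝ} (hK : 0 ≤ K)
    (hv : ∀ᶠ n in atTop, ‖v‖ ≤ C * (K ^ n * ‖r n‖)) : v = 0 :=
  norm_le_zero_iff.1 (ge_of_tendsto (by simpa using (hr K hK).const_mul C) hv)

end SuperexpDecay

end NormedGroup

section Ring

variable {R : Type*} [Ring R]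

theorem pow_mul_pow_add_add_one {B X : R} (hBX : B * X ^ 2 = X) (p q : ℕ) :
    B ^ p * X ^ (p + q + 1) = X ^ (q + 1) := by
  induction p with
  | zero => simp
  | succ p ih =>
    rw [pow_succ, mul_assoc, show p + 1 + q + 1 = 2 + (p + q) by omega, pow_add, ← mul_assoc B,
      hBX, ← pow_succ']
    exact ih

theorem sum_range_pow_mul_sub (B X : R) (n j : ℕ) :
    ∑ i ∈ Finset.range j, X ^ i * (B ^ (i + n) - X * B ^ (i + n + 1)) =
      B ^ n - X ^ j * B ^ (j + n) := by
  convert Finset.sum_range_sub' (fun i => X ^ i * B ^ (i + n)) j using 2 with i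
  · rw [mul_sub, ← mul_assoc, ← pow_succ, add_right_comm]
  · simp

variable {B E : R}

theorem pow_mul_pow_succ_eq_of_commute (hBE : Commute B E) (hEBE : E * B * E = E) (n : ℕ) :
    B ^ n * E ^ (n + 1) = E := by
  rw [pow_succ, ← mul_assoc, ← hBE.mul_pow]
  have hBEE : B * E * E = E := by rw [hBE.eq, hEBE]
  induction n with
  | zero => simp
  | succ n ih => rw [pow_succ, mul_assoc, hBEE, ih]

theorem sub_sq_mul_pow_succ_of_commute (hBE : Commute B E) (hEBE : E * B * E = E) (n : ℕ) :
    (B - B ^ 2 * E) ^ (n + 1) = B ^ (n + 1) - B ^ (n + 2) * E := by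
  have hP : IsIdempotentElem (1 - B * E) := by
    refine IsIdempotentElem.one_sub ?_
    rw [IsIdempotentElem, mul_assoc, ← mul_assoc E, hEBE]
  have hBP : Commute B (1 - B * E) :=
    (Commute.one_right B).sub_right ((Commute.refl B).mul_right hBE)
  rw [show B - B ^ 2 * E = B * (1 - B * E) by rw [mul_sub, mul_one, pow_two, mul_assoc],
    hBP.mul_pow, hP.pow_succ_eq, mul_sub, mul_one, ← mul_assoc, ← pow_succ]

theorem pow_sub_mul_pow_succ_of_commute (hBE : Commute B E) {Y : R} (hY : Y * (B * E) = E)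
    (n : ℕ) : B ^ n - Y * B ^ (n + 1) = (1 - Y * B) * (B ^ n - B ^ (n + 1) * E) := by
  have h : Y * B * (B ^ (n + 1) * E) = B ^ (n + 1) * E := by
    rw [(hBE.pow_left (n + 1)).eq, ← mul_assoc, mul_assoc Y, hY]
  rw [sub_mul, one_mul, mul_sub, h, mul_assoc, ← pow_succ']
  abel

theorem sq_mul_mul_mul_eq_of_commute (hBE : Commute B E) (hEBE : E * B * E = E) {Z : R}
    (hZ : Z * E ^ 2 = E) : E ^ 2 * Z * (B * E) = E := by
  have hEEB : E ^ 2 * B = E := by rw [pow_two, mul_assoc, ← hBE.eq, ← mul_assoc, hEBE]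
  have hBE' : B * E = E ^ 2 * B ^ 2 := by
    rw [← hBE.symm.mul_pow, pow_two, ← mul_assoc, hEBE, hBE.eq]
  calc E ^ 2 * Z * (B * E) = E ^ 2 * (Z * E ^ 2) * B ^ 2 := by rw [hBE']; noncomm_ring
    _ = E * (E ^ 2 * B) * B := by rw [hZ]; noncomm_ring
    _ = E := by rw [hEEB, ← pow_two, hEEB]

theorem sq_mul_mul_sq_eq_of_commute (hBE : Commute B E) (hEBE : E * B * E = E) {X : R}
    (hX : X * B * E = E) : B ^ 2 * X * E ^ 2 = E := by
  have hXE : X * E = E ^ 2 := by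
    conv_lhs => rw [← pow_mul_pow_succ_eq_of_commute hBE hEBE 1]
    rw [pow_one, ← mul_assoc, pow_succ, pow_one, ← mul_assoc, hX]
  calc B ^ 2 * X * E ^ 2 = B ^ 2 * (X * E) * E := by noncomm_ring
    _ = E := by rw [hXE, mul_assoc, ← pow_succ, pow_mul_pow_succ_eq_of_commute hBE hEBE 2]

theorem mul_sq_mul_mul_sq_mul_eq_of_commute (hBE : Commute B E) (hEBE : E * B * E = E) {X x : R}
    (hX : X * B * E = E) (hx : B * E * x = x) : E * B ^ 2 * X * (B ^ 2 * x) = B ^ 2 * x := by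
  have hB2F : B ^ 2 * (B * E) = B * E * B ^ 2 := (((Commute.refl B).mul_right hBE).pow_left 2).eq
  have hEB2E : E * B ^ 2 * E = B * E := by
    rw [pow_two, ← mul_assoc, mul_assoc _ B E, hBE.eq, ← mul_assoc, hEBE]
  calc E * B ^ 2 * X * (B ^ 2 * x) = E * B ^ 2 * X * (B ^ 2 * (B * E) * x) := by
        rw [mul_assoc (B ^ 2), hx]
    _ = E * B ^ 2 * (X * B * E) * B ^ 2 * x := by rw [hB2F]; noncomm_ring
    _ = B ^ 2 * (B * E) * x := by rw [hX, hEB2E, hB2F]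
    _ = B ^ 2 * x := by rw [mul_assoc, hx]

end Ring

section NormedRing

variable {R : Type*} [NormedRing R]

theorem norm_pow_mul_le (X y : R) (n : ℕ) : ‖X ^ n * y‖ ≤ ‖X‖ ^ n * ‖y‖ := by
  induction n with
  | zero => simp
  | succ n ih =>
    rw [pow_succ', mul_assoc, pow_succ', mul_assoc]
    exact (norm_mul_le _ _).trans (by gcongr)

namespace IsGDrazinInv

variable {B E X : R}

theorem commute (hE : IsGDrazinInv B E) : Commute B E := hE.1

theorem superexpDecay (hE : IsGDrazinInv B E) : SuperexpDecay fun n => (B - B ^ 2 * E) ^ n :=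
  superexpDecay_iff_tendsto_rpow.2 hE.2.2

theorem mul_mul_eq_of_superexpDecay (hE : IsGDrazinInv B E)
    (hr : SuperexpDecay fun n => B ^ n - X * B ^ (n + 1)) : X * B * E = E := by
  refine (sub_eq_zero.1 (hr.eq_zero_of_norm_le (C := ‖E‖) (norm_nonneg E)
    (.of_forall fun n => ?_))).symm
  have hXBE : X * B ^ (n + 1) * E ^ (n + 1) = X * B * E := by
    rw [pow_succ' B, mul_assoc X, mul_assoc B, pow_mul_pow_succ_eq_of_commute hE.commute hE.2.1,
      ← mul_assoc]
  have h : E - X * B * E = (B ^ n - X * B ^ (n + 1)) * E ^ (n + 1) := by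
    rw [sub_mul, pow_mul_pow_succ_eq_of_commute hE.commute hE.2.1, hXBE]
  calc ‖E - X * B * E‖ ≤ ‖B ^ n - X * B ^ (n + 1)‖ * ‖E ^ (n + 1)‖ := h ▸ norm_mul_le _ _
    _ ≤ ‖B ^ n - X * B ^ (n + 1)‖ * ‖E‖ ^ (n + 1) := by gcongr; exact norm_pow_le' _ n.succ_pos
    _ = ‖E‖ * (‖E‖ ^ n * ‖B ^ n - X * B ^ (n + 1)‖) := by ring

theorem mul_mul_eq_of_mul_sq_eq (hE : IsGDrazinInv B E) (hBX : B * X ^ 2 = X) :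
    B * E * X = X := by
  refine (sub_eq_zero.1 (hE.superexpDecay.eq_zero_of_norm_le (C := ‖X‖) (norm_nonneg X) ?_)).symm
  filter_upwards [eventually_ge_atTop 1] with n hn
  obtain ⟨m, rfl⟩ := Nat.exists_eq_add_of_le' hn
  have hX : B ^ (m + 1) * X ^ (m + 2) = X := by simpa using pow_mul_pow_add_add_one hBX (m + 1) 0
  have hBEX : B ^ (m + 2) * E * X ^ (m + 2) = B * E * X := by
    rw [pow_succ' B (m + 1), mul_assoc B, (hE.commute.pow_left (m + 1)).eq]
    simp only [mul_assoc, hX]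
  have h : X - B * E * X = (B - B ^ 2 * E) ^ (m + 1) * X ^ (m + 2) := by
    rw [sub_sq_mul_pow_succ_of_commute hE.commute hE.2.1, sub_mul, hX, hBEX]
  calc ‖X - B * E * X‖ ≤ ‖(B - B ^ 2 * E) ^ (m + 1)‖ * ‖X ^ (m + 2)‖ := h ▸ norm_mul_le _ _
    _ ≤ ‖(B - B ^ 2 * E) ^ (m + 1)‖ * ‖X‖ ^ (m + 2) := by
        gcongr; exact norm_pow_le' _ (by omega)
    _ = ‖X‖ * (‖X‖ ^ (m + 1) * ‖(B - B ^ 2 * E) ^ (m + 1)‖) := by ring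

theorem superexpDecay_pow_sub_mul_pow (hE : IsGDrazinInv B E) {Y : R} (hY : Y * (B * E) = E) :
    SuperexpDecay fun n => B ^ n - Y * B ^ (n + 1) := by
  refine hE.superexpDecay.of_norm_le (C := ‖1 - Y * B‖) ?_
  filter_upwards [eventually_ge_atTop 1] with n hn
  obtain ⟨m, rfl⟩ := Nat.exists_eq_add_of_le' hn
  rw [pow_sub_mul_pow_succ_of_commute hE.commute hY,
    ← sub_sq_mul_pow_succ_of_commute hE.commute hE.2.1]
  exact norm_mul_le _ _

end IsGDrazinInv

variable {B E X : R}

theorem cauchySeq_pow_succ_mul_pow (hr : SuperexpDecay fun n => B ^ n - X * B ^ (n + 1)) :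
    CauchySeq fun m => X ^ (m + 1) * B ^ m := by
  refine cauchySeq_of_dist_le_of_summable _ (fun m => ?_)
    ((hr.summable_pow_mul_norm (norm_nonneg X)).mul_left ‖X‖)
  rw [dist_eq_norm, Nat.succ_eq_add_one, pow_succ X (m + 1), mul_assoc (X ^ (m + 1)) X,
    ← mul_sub]
  exact (norm_pow_mul_le X _ (m + 1)).trans_eq (by ring)

theorem commute_of_tendsto_pow_succ_mul_pow (hBX : B * X ^ 2 = X)
    (hlim : Tendsto (fun m => X ^ (m + 1) * B ^ m) atTop (𝓝 E)) : Commute B E := by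
  have h (m : ℕ) : B * (X ^ (m + 1 + 1) * B ^ (m + 1)) = X ^ (m + 1) * B ^ m * B := by
    have key := pow_mul_pow_add_add_one hBX 1 m
    rw [pow_one, show 1 + m + 1 = m + 1 + 1 by omega] at key
    rw [← mul_assoc, key, mul_assoc, ← pow_succ]
  exact tendsto_nhds_unique
    (((hlim.comp (tendsto_add_atTop_nat 1)).const_mul B).congr h) (hlim.mul_const B)

theorem mul_mul_eq_of_tendsto_pow_succ_mul_pow (hBX : B * X ^ 2 = X)
    (hlim : Tendsto (fun m => X ^ (m + 1) * B ^ m) atTop (𝓝 E)) : E * B * E = E := by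
  have hk (k : ℕ) : X ^ (k + 1) * B ^ k * B * E = E := by
    have h (j : ℕ) : X ^ (k + 1) * B ^ k * B * (X ^ (j + (k + 1) + 1) * B ^ (j + (k + 1))) =
        X ^ (j + (k + 1) + 1) * B ^ (j + (k + 1)) := by
      rw [mul_assoc (X ^ (k + 1)) (B ^ k) B, ← pow_succ, mul_assoc, ← mul_assoc (B ^ (k + 1)),
        show j + (k + 1) + 1 = k + 1 + j + 1 by omega, pow_mul_pow_add_add_one hBX,
        ← mul_assoc, ← pow_add, ← add_assoc]
    have hj := hlim.comp (tendsto_add_atTop_nat (k + 1))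
    exact tendsto_nhds_unique ((hj.const_mul _).congr h) hj
  exact (tendsto_const_nhds_iff.1 (((hlim.mul_const B).mul_const E).congr hk)).symm

theorem norm_pow_sub_pow_succ_mul_le_tsum (hBX : B * X ^ 2 = X)
    (hr : SuperexpDecay fun n => B ^ n - X * B ^ (n + 1))
    (hlim : Tendsto (fun m => X ^ (m + 1) * B ^ m) atTop (𝓝 E)) (n : ℕ) :
    ‖B ^ n - B ^ (n + 1) * E‖ ≤ ∑' i, ‖X‖ ^ i * ‖B ^ (i + n) - X * B ^ (i + n + 1)‖ := by
  have h (j : ℕ) : B ^ (n + 1) * (X ^ (j + (n + 1) + 1) * B ^ (j + (n + 1))) =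
      X ^ (j + 1) * B ^ (j + 1 + n) := by
    rw [← mul_assoc, show j + (n + 1) + 1 = n + 1 + j + 1 by omega, pow_mul_pow_add_add_one hBX,
      show j + (n + 1) = j + 1 + n by omega]
  have ht : Tendsto (fun j => B ^ n - X ^ (j + 1) * B ^ (j + 1 + n)) atTop
      (𝓝 (B ^ n - B ^ (n + 1) * E)) :=
    tendsto_const_nhds.sub (((hlim.comp (tendsto_add_atTop_nat (n + 1))).const_mul _).congr h)
  refine le_of_tendsto ht.norm (.of_forall fun j => ?_)
  rw [← sum_range_pow_mul_sub]
  refine (norm_sum_le _ _).trans ((Finset.sum_le_sum fun i _ => norm_pow_mul_le _ _ _).trans ?_)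
  exact (hr.summable_pow_mul_norm_add (norm_nonneg X) n).sum_le_tsum _ (fun i _ => by positivity)

theorem exists_isGDrazinInv_of_superexpDecay [CompleteSpace R] (hBX : B * X ^ 2 = X)
    (hr : SuperexpDecay fun n => B ^ n - X * B ^ (n + 1)) : ∃ E, IsGDrazinInv B E := by
  obtain ⟨E, hlim⟩ := cauchySeq_tendsto_of_complete (cauchySeq_pow_succ_mul_pow hr)
  have hBE := commute_of_tendsto_pow_succ_mul_pow hBX hlim
  have hEBE := mul_mul_eq_of_tendsto_pow_succ_mul_pow hBX hlim
  refine ⟨E, hBE, hEBE, superexpDecay_iff_tendsto_rpow.1 ?_⟩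
  refine (hr.of_norm_le_tsum (norm_nonneg X)
    (norm_pow_sub_pow_succ_mul_le_tsum hBX hr hlim)).of_norm_le (C := 1) ?_
  filter_upwards [eventually_ge_atTop 1] with n hn
  obtain ⟨m, rfl⟩ := Nat.exists_eq_add_of_le' hn
  rw [sub_sq_mul_pow_succ_of_commute hBE hEBE, one_mul]

end NormedRing

section Weighted

variable {R : Type*} [NormedRing R] {w a d : R}

theorem IsWGDrazinInv.isGDrazinInv (hd : IsWGDrazinInv w a d) :
    IsGDrazinInv (a * w) (d * w) := by
  obtain ⟨h1, h2, h3⟩ := hd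
  have hc : a * w * (d * w) = d * w * (a * w) := by simp only [← mul_assoc, h1]
  have hQ : (a - a * w * d * w * a) * w = a * w - (a * w) ^ 2 * (d * w) :=
    calc (a - a * w * d * w * a) * w = a * w - a * w * (a * w * (d * w)) := by
          rw [hc]; noncomm_ring
      _ = a * w - (a * w) ^ 2 * (d * w) := by noncomm_ring
  exact ⟨hc, by simp only [← mul_assoc, h2], hQ ▸ h3⟩

theorem IsGDrazinInv.isWGDrazinInv_sq_mul {E : R} (h : IsGDrazinInv (a * w) E) :
    IsWGDrazinInv w a (E ^ 2 * a) := by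
  have hEw : E ^ 2 * a * w = E := by
    rw [mul_assoc, pow_two, mul_assoc, ← h.commute.eq, ← mul_assoc, h.2.1]
  have hBEE : a * w * E ^ 2 = E := by
    simpa using pow_mul_pow_succ_eq_of_commute h.commute h.2.1 1
  have hQ : (a - a * w * (E ^ 2 * a) * w * a) * w = a * w - (a * w) ^ 2 * E := by
    calc (a - a * w * (E ^ 2 * a) * w * a) * w = a * w - a * w * (E ^ 2 * a * w) * (a * w) := by
          noncomm_ring
      _ = a * w - (a * w) ^ 2 * E := by
          rw [hEw, mul_assoc (a * w) E, ← h.commute.eq, pow_two, ← mul_assoc]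
  refine ⟨by rw [hEw, ← mul_assoc, hBEE], ?_, (hQ ▸ h.2.2 : IsQuasinilpotent _)⟩
  calc E ^ 2 * a * w * a * w * (E ^ 2 * a) = E * (a * w) * E * E * a := by rw [hEw]; noncomm_ring
    _ = E ^ 2 * a := by rw [h.2.1, pow_two]

variable [StarRing R]

theorem IsWCoreEPInv.mul_sq_eq {x : R} (hx : IsWCoreEPInv w a x) :
    a * w * (x * w) ^ 2 = x * w := by
  conv_rhs => rw [← hx.1]
  simp only [pow_two, mul_assoc]

theorem IsWCoreEPInv.superexpDecay {x : R} (hx : IsWCoreEPInv w a x) :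
    SuperexpDecay fun n => (a * w) ^ n - x * w * (a * w) ^ (n + 1) :=
  superexpDecay_iff_tendsto_rpow.2 hx.2.2

theorem IsWGDrazinInv.isWCoreEPInv_sq_mul {z : R} (hd : IsWGDrazinInv w a d)
    (hz : IsWCoreInv w d z) : IsWCoreEPInv w a ((d * w) ^ 2 * z) := by
  have hE := hd.isGDrazinInv
  obtain ⟨-, hz2, hz3⟩ := hz
  have hBEE : a * w * (d * w) ^ 2 = d * w := by
    simpa using pow_mul_pow_succ_eq_of_commute hE.commute hE.2.1 1
  have hY : (d * w) ^ 2 * z * w * (a * w * (d * w)) = d * w := by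
    rw [mul_assoc _ z w]; exact sq_mul_mul_mul_eq_of_commute hE.commute hE.2.1 hz3
  refine ⟨?_, ?_, superexpDecay_iff_tendsto_rpow.1 (hE.superexpDecay_pow_sub_mul_pow hY)⟩
  · calc a * (w * ((d * w) ^ 2 * z)) ^ 2 = a * w * (d * w) ^ 2 * (z * w * (d * w) ^ 2) * z := by
          noncomm_ring
      _ = (d * w) ^ 2 * z := by rw [hz3, hBEE, pow_two]
  · have h : w * a * w * ((d * w) ^ 2 * z) = w * d * w * z := by
      calc w * a * w * ((d * w) ^ 2 * z) = w * (a * w * (d * w) ^ 2) * z := by noncomm_ring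
        _ = w * d * w * z := by rw [hBEE]; noncomm_ring
    rw [h]; exact hz2

theorem IsWGDrazinInv.isWCoreInv_sq_mul {x : R} (hd : IsWGDrazinInv w a d)
    (hx : IsWCoreEPInv w a x) : IsWCoreInv w d ((a * w) ^ 2 * x) := by
  have hE := hd.isGDrazinInv
  have hX := hE.mul_mul_eq_of_superexpDecay hx.superexpDecay
  have hBEX := hE.mul_mul_eq_of_mul_sq_eq hx.mul_sq_eq
  have hx1 : a * w * (x * w) * x = x := by
    conv_rhs => rw [← hx.1]
    simp only [pow_two, mul_assoc]
  have hBEx : a * w * (d * w) * x = x := by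
    calc a * w * (d * w) * x = a * w * (d * w * (a * w)) * (x * w) * x := by
          conv_lhs => rw [← hx1]
          noncomm_ring
      _ = x := by rw [← hE.commute.eq, mul_assoc (a * w) (a * w * (d * w)), hBEX, hx1]
  refine ⟨?_, ?_, ?_⟩
  · calc d * (w * ((a * w) ^ 2 * x)) ^ 2 = d * w * (a * w) ^ 2 * (x * w) * ((a * w) ^ 2 * x) := by
          noncomm_ring
      _ = (a * w) ^ 2 * x := mul_sq_mul_mul_sq_mul_eq_of_commute hE.commute hE.2.1 hX hBEx
  · have h : w * d * w * ((a * w) ^ 2 * x) = w * a * w * x := by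
      calc w * d * w * ((a * w) ^ 2 * x) = w * (d * w * (a * w) ^ 2) * x := by noncomm_ring
        _ = w * (a * w) * (a * w * (d * w) * x) := by
          rw [← (hE.commute.pow_left 2).eq]; noncomm_ring
        _ = w * a * w * x := by rw [hBEx]; noncomm_ring
    rw [h]; exact hx.2.1
  · rw [mul_assoc _ x w]; exact sq_mul_mul_sq_eq_of_commute hE.commute hE.2.1 hX

theorem IsWCoreInv.mul_mul_mul_mul_eq {z z' : R} (hz : IsWCoreInv w d z)
    (hz' : IsWCoreInv w d z') : z * w * d * w * z' = z' := by
  calc z * w * d * w * z' = z * w * d * w * (d * (w * z') ^ 2) := by rw [hz'.1]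
    _ = z * w * (d * w) ^ 2 * (z' * w * z') := by noncomm_ring
    _ = d * (w * z') ^ 2 := by rw [hz.2.2]; noncomm_ring
    _ = z' := hz'.1

theorem IsWCoreInv.unique {z z' : R} (hz : IsWCoreInv w d z) (hz' : IsWCoreInv w d z') :
    z = z' := by
  have hmul {u v : R} (hu : IsWCoreInv w d u) (hv : IsWCoreInv w d v) :
      w * d * w * u * (w * d * w * v) = w * d * w * v := by
    rw [show w * d * w * u * (w * d * w * v) = w * d * w * (u * w * d * w * v) by noncomm_ring,
      hu.mul_mul_mul_mul_eq hv]
  have hp : w * d * w * z = w * d * w * z' :=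
    calc w * d * w * z = star (w * d * w * z' * (w * d * w * z)) := by rw [hmul hz' hz, hz.2.1]
      _ = w * d * w * z' := by rw [star_mul, hz.2.1, hz'.2.1, hmul hz hz']
  calc z = z' * (w * d * w * z) := (hz'.mul_mul_mul_mul_eq hz).symm.trans (by noncomm_ring)
    _ = z' := by rw [hp, ← mul_assoc, ← mul_assoc, ← mul_assoc, hz'.mul_mul_mul_mul_eq hz']

theorem IsWCoreEPInv.exists_isWGDrazinInv [CompleteSpace R] {x : R} (hx : IsWCoreEPInv w a x) :
    ∃ d, IsWGDrazinInv w a d := by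
  obtain ⟨E, hE⟩ := exists_isGDrazinInv_of_superexpDecay hx.mul_sq_eq hx.superexpDecay
  exact ⟨_, hE.isWGDrazinInv_sq_mul⟩

end Weighted

variable {A : Type*} [NormedRing A] [NormedAlgebra ℂ A] [StarRing A] [StarModule ℂ A]
  [CompleteSpace A]

/-- Theorem 4.2. -/
theorem isWCoreEPInv_exists_iff_gDrazin_wCore (w a : A) :
    ((∃ x, IsWCoreEPInv w a x) ↔
      ∃ d, IsWGDrazinInv w a d ∧ ∃ z, IsWCoreInv w d z) ∧
    (∀ d z : A, IsWGDrazinInv w a d → IsWCoreInv w d z →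
      IsWCoreEPInv w a ((d * w) ^ 2 * z) ∧
        ∀ x : A, IsWCoreEPInv w a x → z = (a * w) ^ 2 * x) := by
  refine ⟨⟨fun ⟨x, hx⟩ => ?_, fun ⟨d, hd, z, hz⟩ => ⟨_, hd.isWCoreEPInv_sq_mul hz⟩⟩,
    fun d z hd hz => ⟨hd.isWCoreEPInv_sq_mul hz, fun x hx => hz.unique (hd.isWCoreInv_sq_mul hx)⟩⟩
  obtain ⟨d, hd⟩ := hx.exists_isWGDrazinInv
  exact ⟨d, hd, _, hd.isWCoreInv_sq_mul hx⟩
end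

section
/- Let a ∈ 𝒜. Then a has a generalized w-weighted core-EP inverse if and only if a has a w-weighted g-Drazin inverse a^{d,w} and a^{d,w} has a (1,3,w)-inverse. Moreover, if u is any (1,3,w)-inverse of a^{d,w}, then a^{⊛d,w} = (a^{d,w}·w)²·u. -/
open Filter

variable {A : Type*} [NormedRing A] [NormedAlgebra ℂ A] [StarRing A] [StarModule ℂ A]
  [CompleteSpace A]


/-!
Write `c = w * a`. A `w`-weighted generalized core-EP inverse `x` of `a` is exactly an `x` with
`a (wx)² = x` such that `wx` is a generalized core-EP inverse of `c`, and `d ↦ wd`, `e ↦ a e²`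
pass between `w`-weighted g-Drazin inverses of `a` and g-Drazin inverses of `c`; so everything
reduces to the unweighted case for `c`.

If `e = c^d` and `v` is a (1,3)-inverse of `e`, then `cⁿ⁺¹ - e²v cⁿ⁺² = ρⁿ⁺¹ - e²v ρⁿ⁺²` with
`ρ = c - c²e` quasinilpotent, so `e²v` is the generalized core-EP inverse of `c`.

Conversely, let `z` be a generalized core-EP inverse of `c`. Since
`(cᵏ - z cᵏ⁺¹) z = (cⁿ⁺ᵏ - z cⁿ⁺ᵏ⁺¹) zⁿ⁺¹` for every `n`, the decay of `cⁿ - z cⁿ⁺¹` forces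
`zcz = z` and `zc²z = cz`. Then `q = cz` is an idempotent with `(1 - q) c q = 0`, `z` inverts
`qcq` in `qAq`, and `m = (1 - q) c` is quasinilpotent: `c` is upper triangular with respect to
`q`. Its g-Drazin inverse is `z + zY`, where the corner `Y = ∑ zᵏ⁺¹ (c - c²z) mᵏ` solves
`Y = z (c - c²z + Y m)`.
-/

open Asymptotics Topology

/-- Equivalent to `‖u n‖ ^ (1 / n) → 0` (`superexponentialDecay_iff_tendsto`), but stated so that
the `IsBigO` calculus applies. -/
def SuperexponentialDecay {E : Type*} [Norm E] (u : ℕ → E) : Prop :=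
  ∀ r : ℝ, 0 < r → u =O[atTop] (r ^ ·)

namespace SuperexponentialDecay

variable {E F : Type*} [SeminormedAddCommGroup E] [SeminormedAddCommGroup F] {u : ℕ → E}

theorem of_isBigO (hu : SuperexponentialDecay u) {v : ℕ → F} (h : v =O[atTop] u) :
    SuperexponentialDecay v :=
  fun r hr => h.trans (hu r hr)

theorem congr (hu : SuperexponentialDecay u) {v : ℕ → E} (h : ∀ n, u n = v n) :
    SuperexponentialDecay v :=
  funext h ▸ hu

theorem add (hu : SuperexponentialDecay u) {v : ℕ → E} (hv : SuperexponentialDecay v) :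
    SuperexponentialDecay (fun n => u n + v n) :=
  fun r hr => (hu r hr).add (hv r hr)

theorem sub (hu : SuperexponentialDecay u) {v : ℕ → E} (hv : SuperexponentialDecay v) :
    SuperexponentialDecay (fun n => u n - v n) :=
  fun r hr => (hu r hr).sub (hv r hr)

theorem comp_add_iff (k : ℕ) :
    SuperexponentialDecay (fun n => u (n + k)) ↔ SuperexponentialDecay u := by
  refine forall₂_congr fun r hr => ?_
  have hpow : ((r ^ ·) ∘ (· + k)) = fun n => r ^ k * r ^ n := by
    ext n; simp [pow_add, mul_comm]
  conv_rhs => rw [← map_add_atTop_eq_nat k, isBigO_map, hpow,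
    isBigO_const_mul_right_iff (pow_ne_zero k hr.ne')]
  rfl

theorem comp_add (hu : SuperexponentialDecay u) (k : ℕ) :
    SuperexponentialDecay (fun n => u (n + k)) :=
  (comp_add_iff k).2 hu

theorem isBigO_half_pow (hu : SuperexponentialDecay u) (M : ℝ) :
    (fun n => ‖u n‖ * M ^ n) =O[atTop] ((1 / 2 : ℝ) ^ ·) := by
  set r := 1 / (2 * (|M| + 1))
  have hr : 0 < r := by positivity
  refine ((hu r hr).norm_left.mul (isBigO_refl (M ^ ·) atTop)).trans (.of_bound' ?_)
  refine .of_forall fun n => ?_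
  rw [← mul_pow, norm_pow, norm_pow]
  gcongr
  rw [norm_mul, Real.norm_of_nonneg hr.le, Real.norm_eq_abs, norm_div, norm_one, Real.norm_two,
    div_mul_eq_mul_div, one_mul, div_le_iff₀ (by positivity)]
  linarith

theorem summable_mul_pow (hu : SuperexponentialDecay u) (M : ℝ) :
    Summable (fun n => ‖u n‖ * M ^ n) :=
  summable_of_isBigO_nat summable_geometric_two (hu.isBigO_half_pow M)

theorem tendsto_mul_pow (hu : SuperexponentialDecay u) (M : ℝ) :
    Tendsto (fun n => ‖u n‖ * M ^ n) atTop (𝓝 0) :=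
  (hu.isBigO_half_pow M).trans_tendsto
    (tendsto_pow_atTop_nhds_zero_of_lt_one (by norm_num) (by norm_num))

theorem eq_zero_of_norm_le {N : Type*} [NormedAddCommGroup N] {u : ℕ → N}
    (hu : SuperexponentialDecay u) {t : N} (M : ℝ) (h : ∀ᶠ n in atTop, ‖t‖ ≤ ‖u n‖ * M ^ n) :
    t = 0 :=
  norm_le_zero_iff.1 (ge_of_tendsto (hu.tendsto_mul_pow M) h)

end SuperexponentialDecay

theorem rpow_one_div_lt_iff_lt_pow {x y : ℝ} (hx : 0 ≤ x) (hy : 0 ≤ y) {n : ℕ} (hn : n ≠ 0) :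
    x ^ (1 / (n : ℝ)) < y ↔ x < y ^ n := by
  rw [one_div, Real.rpow_inv_lt_iff_of_pos hx hy (by positivity), Real.rpow_natCast]

theorem superexponentialDecay_iff_tendsto {E : Type*} [SeminormedAddCommGroup E] {u : ℕ → E} :
    SuperexponentialDecay u ↔ Tendsto (fun n : ℕ => ‖u n‖ ^ (1 / (n : ℝ))) atTop (𝓝 0) := by
  constructor
  · intro hu
    refine tendsto_order.2 ⟨fun a ha => .of_forall fun n => ha.trans_le (by positivity),
      fun ε hε => ?_⟩
    obtain ⟨C, -, hC⟩ := (hu (ε / 2) (by positivity)).exists_pos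
    have hsmall : ∀ᶠ n : ℕ in atTop, C * (1 / 2 : ℝ) ^ n < 1 :=
      ((tendsto_pow_atTop_nhds_zero_of_lt_one (by norm_num) (by norm_num)).const_mul C
        |>.eventually_lt_const (by simp))
    filter_upwards [hC.bound, hsmall, eventually_ne_atTop 0] with n hn hsmall hn0
    rw [rpow_one_div_lt_iff_lt_pow (norm_nonneg _) hε.le hn0]
    calc ‖u n‖ ≤ C * ‖(ε / 2) ^ n‖ := hn
      _ = C * (1 / 2) ^ n * ε ^ n := by
        rw [norm_pow, Real.norm_of_nonneg (by positivity), div_eq_mul_one_div ε, mul_comm ε,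
          mul_pow, mul_assoc]
      _ < ε ^ n := mul_lt_of_lt_one_left (by positivity) hsmall
  · intro hu r hr
    refine .of_bound' ?_
    filter_upwards [hu.eventually_lt_const hr, eventually_ne_atTop 0] with n hn hn0
    rw [norm_pow, Real.norm_of_nonneg hr.le]
    exact ((rpow_one_div_lt_iff_lt_pow (norm_nonneg _) hr.le hn0).1 hn).le

section NormedRing

variable {R : Type*} [NormedRing R]

theorem SuperexponentialDecay.const_mul {s : ℕ → R} (hs : SuperexponentialDecay s) (a : R) :
    SuperexponentialDecay (fun n => a * s n) :=
  fun r hr => (hs r hr).const_mul_left a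

theorem SuperexponentialDecay.mul_const {s : ℕ → R} (hs : SuperexponentialDecay s) (b : R) :
    SuperexponentialDecay (fun n => s n * b) :=
  hs.of_isBigO <| .of_bound ‖b‖ <| .of_forall fun n => by
    rw [mul_comm ‖b‖]; exact norm_mul_le _ _

theorem isQuasinilpotent_iff {y : R} : IsQuasinilpotent y ↔ SuperexponentialDecay (y ^ ·) :=
  superexponentialDecay_iff_tendsto.symm

theorem IsQuasinilpotent.mul_comm {x y : R} (h : IsQuasinilpotent (x * y)) :
    IsQuasinilpotent (y * x) := by
  rw [isQuasinilpotent_iff] at h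
  rw [isQuasinilpotent_iff, ← SuperexponentialDecay.comp_add_iff 1]
  have hpow (n : ℕ) : (y * x) ^ (n + 1) = y * (x * y) ^ n * x := by
    rw [pow_succ, ← mul_assoc, mul_pow_mul]
  simpa only [hpow] using (h.const_mul y).mul_const x

end NormedRing

section Ring

variable {R : Type*} [Ring R]

theorem sub_sq_mul_pow_succ {c e : R} (hce : Commute c e) (hece : e * c * e = e) (n : ℕ) :
    (c - c ^ 2 * e) ^ (n + 1) = c ^ (n + 1) - c ^ (n + 2) * e := by
  have hidem : IsIdempotentElem (1 - c * e) := IsIdempotentElem.one_sub <| by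
    rw [IsIdempotentElem, mul_assoc, ← mul_assoc e, hece]
  have hcomm : Commute c (1 - c * e) :=
    (Commute.one_right c).sub_right ((Commute.refl c).mul_right hce)
  calc (c - c ^ 2 * e) ^ (n + 1) = (c * (1 - c * e)) ^ (n + 1) := by
        rw [mul_sub, mul_one, sq, mul_assoc]
    _ = c ^ (n + 1) - c ^ (n + 2) * e := by
        rw [hcomm.mul_pow, hidem.pow_succ_eq, mul_sub, mul_one, ← mul_assoc, ← pow_succ]

theorem sq_mul_sq {e v : R} (heve : e * v * e = e) : (e ^ 2 * v) ^ 2 = e ^ 2 * (e * v) :=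
  calc (e ^ 2 * v) ^ 2 = e * (e * v * e) * e * v := by simp only [sq, mul_assoc]
    _ = e ^ 2 * (e * v) := by rw [heve, sq, mul_assoc]

theorem one_sub_mul_pow_succ {m Y : R} (h : m * Y = 0) (n : ℕ) :
    ((1 - Y) * m) ^ (n + 1) = (1 - Y) * m ^ (n + 1) := by
  rw [pow_succ, ← mul_assoc, mul_pow_mul, mul_sub, mul_one, h, sub_zero, mul_assoc, ← pow_succ]

variable {c z Y : R}

theorem sub_mul_mul_mul_mul_eq_zero (h3 : z * c ^ 2 * z = c * z) :
    (c - c * z * c) * (c * z) = 0 := by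
  rw [sub_mul, show c * z * c * (c * z) = c * (z * c ^ 2 * z) by simp only [sq, mul_assoc], h3,
    sub_self]

theorem sub_mul_mul_mul_pow_succ (h3 : z * c ^ 2 * z = c * z) (n : ℕ) :
    (c - c * z * c) ^ (n + 1) = c * (c ^ n - z * c ^ (n + 1)) := by
  set m := c - c * z * c
  have hmm : m * m = m * c := by
    rw [mul_sub m c, ← mul_assoc m (c * z) c, sub_mul_mul_mul_mul_eq_zero h3, zero_mul, sub_zero]
  have hpow (n : ℕ) : m ^ (n + 1) = m * c ^ n := by
    induction n with
    | zero => rw [pow_one, pow_zero, mul_one]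
    | succ n ih => rw [pow_succ', ih, ← mul_assoc, hmm, mul_assoc, ← pow_succ']
  rw [hpow, sub_mul, mul_sub, mul_assoc c z c, mul_assoc c, mul_assoc z, ← pow_succ']

theorem mul_mul_eq_of_sylvester (h1 : c * z ^ 2 = z)
    (hY : Y = z * (c - c ^ 2 * z + Y * (c - c * z * c))) : c * z * Y = Y := by
  conv_lhs => rw [hY]
  rw [← mul_assoc, mul_assoc c, ← sq, h1, ← hY]

theorem mul_mul_eq_zero_of_sylvester (h2 : z * c * z = z) (h3 : z * c ^ 2 * z = c * z)
    (hY : Y = z * (c - c ^ 2 * z + Y * (c - c * z * c))) : Y * (c * z) = 0 := by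
  have hg : (c - c ^ 2 * z) * (c * z) = 0 := by
    rw [sub_mul, mul_assoc, ← mul_assoc z, h2, sq, mul_assoc, sub_self]
  rw [hY, mul_assoc, add_mul, hg, zero_add, mul_assoc, sub_mul_mul_mul_mul_eq_zero h3, mul_zero,
    mul_zero]

theorem add_mul_mul_eq_of_sylvester (h2 : z * c * z = z) (h3 : z * c ^ 2 * z = c * z)
    (hY : Y = z * (c - c ^ 2 * z + Y * (c - c * z * c))) : (z + z * Y) * c = c * z + Y := by
  have hYm : Y * (c - c * z * c) = Y * c := by
    rw [mul_sub, ← mul_assoc Y, mul_mul_eq_zero_of_sylvester h2 h3 hY, zero_mul, sub_zero]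
  have hzYc : z * (Y * c) = Y - z * (c - c ^ 2 * z) := by
    rw [← hYm, eq_sub_iff_add_eq', ← mul_add, ← hY]
  rw [add_mul, mul_assoc, hzYc, mul_sub, ← mul_assoc z, h3]
  abel

theorem sub_sq_mul_add_mul_eq_of_sylvester (h1 : c * z ^ 2 = z) (h3 : z * c ^ 2 * z = c * z)
    (hY : Y = z * (c - c ^ 2 * z + Y * (c - c * z * c))) :
    c - c ^ 2 * (z + z * Y) = (1 - Y) * (c - c * z * c) := by
  have hcY : c * Y = c * z * (c - c ^ 2 * z) + Y * (c - c * z * c) := by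
    conv_lhs => rw [hY]
    rw [← mul_assoc, mul_add, ← mul_assoc (c * z) Y, mul_mul_eq_of_sylvester h1 hY]
  rw [mul_add, sq, mul_assoc c c (z * Y), ← mul_assoc c z Y, mul_mul_eq_of_sylvester h1 hY, hcY,
    mul_sub, show c * z * (c ^ 2 * z) = c * (z * c ^ 2 * z) by simp only [mul_assoc], h3, sub_mul,
    one_mul]
  simp only [mul_assoc]
  abel

theorem sub_mul_mul_mul_eq_zero_of_sylvester (h1 : c * z ^ 2 = z) (h3 : z * c ^ 2 * z = c * z)
    (hY : Y = z * (c - c ^ 2 * z + Y * (c - c * z * c))) : (c - c * z * c) * Y = 0 := by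
  rw [← mul_mul_eq_of_sylvester h1 hY, ← mul_assoc, sub_mul_mul_mul_mul_eq_zero h3, zero_mul]

end Ring

theorem IsGDrazinInv.isCoreEPInv_sq_mul {R : Type*} [NormedRing R] [StarRing R] {c e v : R}
    (he : IsGDrazinInv c e) (hv : Is13Inv e v) : IsCoreEPInv c (e ^ 2 * v) := by
  obtain ⟨hce, hece, hq⟩ := he
  obtain ⟨heve, hstar⟩ := hv
  have hcee : c * e ^ 2 = e := by rw [sq, ← mul_assoc, hce, hece]
  refine ⟨?_, by rwa [← mul_assoc, hcee], ?_⟩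
  · rw [sq_mul_sq heve, ← mul_assoc, hcee, sq, mul_assoc]
  have key (n : ℕ) : e ^ 2 * v * (c ^ (n + 1) * e) = c ^ n * e := by
    calc e ^ 2 * v * (c ^ (n + 1) * e) = e * (e * v * e) * c ^ (n + 1) := by
          rw [(Commute.pow_left hce (n + 1)).eq]; simp only [sq, mul_assoc]
      _ = e * (e * c) * c ^ n := by rw [heve, pow_succ', ← mul_assoc, ← mul_assoc]
      _ = c ^ n * e := by rw [← hce, ← mul_assoc, hece, (Commute.pow_left hce n).eq]
  have hρ := isQuasinilpotent_iff.1 hq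
  rw [← superexponentialDecay_iff_tendsto, ← SuperexponentialDecay.comp_add_iff 1]
  refine ((hρ.comp_add 1).sub ((hρ.comp_add 2).const_mul (e ^ 2 * v))).congr fun n => ?_
  simp only [sub_sq_mul_pow_succ hce hece, mul_sub, key]
  abel

theorem exists_eq_mul_add_mul_mul {R : Type*} [NormedRing R] [CompleteSpace R] {m : R}
    (hm : SuperexponentialDecay (m ^ ·)) (z g : R) : ∃ Y, Y = z * (g + Y * m) := by
  have hs : Summable fun k => z ^ (k + 1) * g * m ^ k := by
    refine summable_of_isBigO_nat (hm.summable_mul_pow ‖z‖)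
      (.of_bound (‖z‖ * ‖g‖) (.of_forall fun k => ?_))
    rw [Real.norm_of_nonneg (by positivity)]
    calc _ ≤ ‖z ^ (k + 1)‖ * ‖g‖ * ‖m ^ k‖ := norm_mul₃_le
      _ ≤ ‖z‖ ^ (k + 1) * ‖g‖ * ‖m ^ k‖ := by gcongr; exact norm_pow_le' z k.succ_pos
      _ = ‖z‖ * ‖g‖ * (‖m ^ k‖ * ‖z‖ ^ k) := by ring
  refine ⟨∑' k, z ^ (k + 1) * g * m ^ k, ?_⟩
  conv_lhs => rw [hs.tsum_eq_zero_add]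
  rw [mul_add, ← hs.tsum_mul_right, ← (hs.mul_right m).tsum_mul_left]
  congr 1
  · simp
  · exact tsum_congr fun k => by simp only [pow_succ' z (k + 1), pow_succ m k, mul_assoc]

theorem sub_mul_pow_succ_mul_eq_zero {R : Type*} [NormedRing R] {c z : R} (h1 : c * z ^ 2 = z)
    (hs : SuperexponentialDecay fun n => c ^ n - z * c ^ (n + 1)) (k : ℕ) :
    (c ^ k - z * c ^ (k + 1)) * z = 0 := by
  have hpow (n : ℕ) : c ^ n * z ^ (n + 1) = z := by
    induction n with
    | zero => simp
    | succ n ih =>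
      have hsplit : z ^ (n + 1 + 1) = z ^ 2 * z ^ n := by rw [← pow_add]; congr 1; omega
      rw [pow_succ, mul_assoc, hsplit, ← mul_assoc c, h1, ← pow_succ', ih]
  have hshift (n : ℕ) :
      (c ^ (n + k) - z * c ^ (n + k + 1)) * z * z ^ n = (c ^ k - z * c ^ (k + 1)) * z := by
    calc _ = c ^ k * (c ^ n * z ^ (n + 1)) - z * (c ^ (k + 1) * (c ^ n * z ^ (n + 1))) := by
          rw [add_comm n k, add_right_comm, mul_assoc _ z, ← pow_succ', sub_mul, pow_add c k,
            pow_add c (k + 1)]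
          simp only [mul_assoc]
      _ = _ := by rw [hpow, sub_mul, mul_assoc]
  refine ((hs.comp_add k).mul_const z).eq_zero_of_norm_le ‖z‖ ?_
  filter_upwards [eventually_ne_atTop 0] with n hn
  rw [← hshift n]
  exact (norm_mul_le _ _).trans (by gcongr; exact norm_pow_le' z (Nat.pos_of_ne_zero hn))

theorem exists_isGDrazinInv_of_mul_sq_eq {R : Type*} [NormedRing R] [CompleteSpace R] {c z : R}
    (h1 : c * z ^ 2 = z) (hs : SuperexponentialDecay fun n => c ^ n - z * c ^ (n + 1)) :
    ∃ f, IsGDrazinInv c f ∧ f * (c ^ 2 * z) = c * z ∧ c * z * f = f := by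
  have h2 : z * c * z = z := by
    have := sub_mul_pow_succ_mul_eq_zero h1 hs 0
    rwa [pow_zero, zero_add, pow_one, sub_mul, one_mul, sub_eq_zero, eq_comm] at this
  have h3 : z * c ^ 2 * z = c * z := by
    have := sub_mul_pow_succ_mul_eq_zero h1 hs 1
    rwa [pow_one, one_add_one_eq_two, sub_mul, sub_eq_zero, eq_comm] at this
  have hm : SuperexponentialDecay ((c - c * z * c) ^ ·) := by
    rw [← SuperexponentialDecay.comp_add_iff 1]
    simpa only [sub_mul_mul_mul_pow_succ h3] using hs.const_mul c
  obtain ⟨Y, hY⟩ := exists_eq_mul_add_mul_mul hm z (c - c ^ 2 * z)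
  have hfc := add_mul_mul_eq_of_sylvester h2 h3 hY
  have hcf : c * (z + z * Y) = c * z + Y := by
    rw [mul_add, ← mul_assoc, mul_mul_eq_of_sylvester h1 hY]
  have hYq := mul_mul_eq_zero_of_sylvester h2 h3 hY
  have hYz : Y * z = 0 := by
    rw [← h1, sq, ← mul_assoc c z z, ← mul_assoc, hYq, zero_mul]
  refine ⟨z + z * Y, ⟨hcf.trans hfc.symm, ?_, ?_⟩, ?_, ?_⟩
  · rw [hfc, add_mul, mul_add, mul_add, ← mul_assoc (c * z) z Y, mul_assoc c z z, ← sq, h1,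
      ← mul_assoc Y z Y, hYz, zero_mul, add_zero, add_zero]
  · rw [isQuasinilpotent_iff, ← SuperexponentialDecay.comp_add_iff 1,
      sub_sq_mul_add_mul_eq_of_sylvester h1 h3 hY]
    simp only [one_sub_mul_pow_succ (sub_mul_mul_mul_eq_zero_of_sylvester h1 h3 hY)]
    exact (hm.comp_add 1).const_mul (1 - Y)
  · rw [sq, ← mul_assoc, ← mul_assoc, hfc]
    simp only [add_mul, mul_assoc] at h2 hYq ⊢
    rw [h2, hYq, add_zero]
  · rw [mul_add, ← mul_assoc (c * z) z Y, mul_assoc c z z, ← sq, h1]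
theorem isWCoreEPInv_iff {R : Type*} [NormedRing R] [StarRing R] {w a x : R} :
    IsWCoreEPInv w a x ↔ a * (w * x) ^ 2 = x ∧ IsCoreEPInv (w * a) (w * x) := by
  have hwa (n : ℕ) : (w * a) ^ (n + 1) = w * (a * w) ^ n * a := by
    rw [pow_succ, ← mul_assoc, mul_pow_mul]
  have haw (n : ℕ) : (a * w) ^ (n + 1) = a * (w * a) ^ n * w := by
    rw [pow_succ, ← mul_assoc, mul_pow_mul]
  have hstar_iff :
      star (w * a * w * x) = w * a * w * x ↔ star (w * a * (w * x)) = w * a * (w * x) := by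
    simp only [mul_assoc]
  unfold IsWCoreEPInv IsCoreEPInv
  simp only [← superexponentialDecay_iff_tendsto, hstar_iff]
  constructor
  · rintro ⟨hx, hstar, hs⟩
    refine ⟨hx, by rw [mul_assoc, hx], hstar, ?_⟩
    rw [← SuperexponentialDecay.comp_add_iff 1]
    refine ((hs.const_mul w).mul_const a).congr fun n => ?_
    rw [hwa, hwa, mul_sub, sub_mul]
    simp only [mul_assoc]
  · rintro ⟨hx, -, hstar, ht⟩
    refine ⟨hx, hstar, ?_⟩
    rw [← SuperexponentialDecay.comp_add_iff 1]
    refine (((ht.add ((ht.comp_add 1).const_mul (w * x))).const_mul a).mul_const w).congr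
      fun n => ?_
    conv_rhs => rw [← hx]
    rw [haw, haw, pow_succ' (w * a) (n + 1)]
    noncomm_ring

section Weighted

variable {R : Type*} [NormedRing R] {w a : R}

theorem IsWGDrazinInv.isGDrazinInv_mul {d : R} (hd : IsWGDrazinInv w a d) :
    IsGDrazinInv (w * a) (w * d) := by
  obtain ⟨hcomm, hdwd, hq⟩ := hd
  refine ⟨?_, ?_, ?_⟩
  · simp only [mul_assoc] at hcomm ⊢
    rw [hcomm]
  · simp only [mul_assoc] at hdwd ⊢
    rw [hdwd]
  · have : w * a - (w * a) ^ 2 * (w * d) = w * (a - a * w * d * w * a) := by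
      simp only [sq, mul_sub, mul_assoc] at hcomm ⊢
      rw [hcomm]
    exact this ▸ IsQuasinilpotent.mul_comm hq

theorem IsWGDrazinInv.mul_sq {d : R} (hd : IsWGDrazinInv w a d) : a * (w * d) ^ 2 = d := by
  calc a * (w * d) ^ 2 = a * w * d * w * d := by simp only [sq, mul_assoc]
    _ = d := by rw [hd.1, hd.2.1]

theorem IsGDrazinInv.isWGDrazinInv {e : R} (he : IsGDrazinInv (w * a) e) :
    IsWGDrazinInv w a (a * e ^ 2) := by
  obtain ⟨hce, hece, hq⟩ := he
  have hcee : w * (a * e ^ 2) = e := by rw [← mul_assoc, sq, ← mul_assoc, hce, hece]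
  have heec : e ^ 2 * (w * a) = e := by rw [sq, mul_assoc, ← hce, ← mul_assoc, hece]
  refine ⟨?_, ?_, ?_⟩
  · rw [mul_assoc, hcee, mul_assoc, mul_assoc, heec]
  · rw [mul_assoc _ w, hcee, mul_assoc (a * e ^ 2) w a, mul_assoc a (e ^ 2), heec, mul_assoc, ← sq]
  · have : w * (a - a * w * (a * e ^ 2) * w * a) = w * a - (w * a) ^ 2 * e := by
      rw [mul_sub]
      congr 1
      calc w * (a * w * (a * e ^ 2) * w * a) = w * a * (w * (a * e ^ 2)) * (w * a) := by
            simp only [mul_assoc]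
        _ = (w * a) ^ 2 * e := by rw [hcee, mul_assoc, ← hce, ← mul_assoc, sq]
    exact IsQuasinilpotent.mul_comm (this ▸ hq)

variable [StarRing R]

theorem IsWGDrazinInv.isWCoreEPInv {d u : R} (hd : IsWGDrazinInv w a d) (hu : Is13wInv w d u) :
    IsWCoreEPInv w a ((d * w) ^ 2 * u) := by
  have hv : Is13Inv (w * d) (w * u) := by
    refine ⟨?_, by simpa only [mul_assoc] using hu.2⟩
    calc w * d * (w * u) * (w * d) = w * (d * w * u * w * d) := by simp only [mul_assoc]
      _ = w * d := by rw [← hu.1]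
  have hwx : w * ((d * w) ^ 2 * u) = (w * d) ^ 2 * (w * u) := by simp only [sq, mul_assoc]
  rw [isWCoreEPInv_iff, hwx, sq_mul_sq hv.1, ← mul_assoc, hd.mul_sq]
  refine ⟨?_, hd.isGDrazinInv_mul.isCoreEPInv_sq_mul hv⟩
  simp only [sq, mul_assoc]

theorem IsWCoreEPInv.exists_isWGDrazinInv_is13wInv [CompleteSpace R] {x : R}
    (hx : IsWCoreEPInv w a x) :
    ∃ d, IsWGDrazinInv w a d ∧ Is13wInv w d (a * (w * a) * (w * x)) := by
  obtain ⟨-, hz, hstar, hs⟩ := isWCoreEPInv_iff.1 hx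
  obtain ⟨e, he, hecz, hcze⟩ :=
    exists_isGDrazinInv_of_mul_sq_eq hz (superexponentialDecay_iff_tendsto.2 hs)
  have hwd : w * (a * e ^ 2) = e := by rw [← mul_assoc, sq, ← mul_assoc, he.1, he.2.1]
  have hwu : w * (a * (w * a) * (w * x)) = (w * a) ^ 2 * (w * x) := by simp only [sq, mul_assoc]
  refine ⟨a * e ^ 2, he.isWGDrazinInv, Eq.symm ?_, ?_⟩
  · calc a * e ^ 2 * w * (a * (w * a) * (w * x)) * w * (a * e ^ 2)
        = a * e * (e * ((w * a) ^ 2 * (w * x))) * (w * (a * e ^ 2)) := by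
          simp only [sq, mul_assoc]
      _ = a * e ^ 2 := by rw [hecz, hwd, mul_assoc (a * e), hcze, mul_assoc, ← sq]
  · rwa [mul_assoc _ w, hwu, hwd, hecz]

end Weighted

/-- Theorem 4.4. -/
theorem isWCoreEPInv_exists_iff_gDrazin_13w (w a : A) :
    ((∃ x, IsWCoreEPInv w a x) ↔
      ∃ d, IsWGDrazinInv w a d ∧ ∃ u, Is13wInv w d u) ∧
    (∀ d u : A, IsWGDrazinInv w a d → Is13wInv w d u →
      IsWCoreEPInv w a ((d * w) ^ 2 * u)) := by
  refine ⟨⟨fun ⟨x, hx⟩ => ?_, fun ⟨d, hd, u, hu⟩ => ⟨_, hd.isWCoreEPInv hu⟩⟩,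
    fun d u hd hu => hd.isWCoreEPInv hu⟩
  obtain ⟨d, hd, hu⟩ := hx.exists_isWGDrazinInv_is13wInv
  exact ⟨d, hd, _, hu⟩
end
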